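/- arXiv:1904.04431 — 4 statements merged into one kernel-verified Lean document; each statement's English description precedes it below -/
import Mathlib

section
/- The barrier extension mechanism of Setting I is dominant-strategy incentive compatible for left-over students: for any left-over student s, for any fixed preference reports of all other students and schools, the school assigned to s when s reports truthfully is weakly preferred by s (under her true preferences) to the school assigned when s reports any other preference list. -/
open scoped Classical

/-- A school-choice instance: capacities, students' strict preferences over
schools-or-unmatched (lower rank = more preferred), and schools' strict
preferences over students-or-empty-seat. -/
structure Inst (S H : Type) where
  cap : H → ℕ
  sR : S → Option H → ℕ
  hR : H → Option S → ℕ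
  sInj : ∀ s, Function.Injective (sR s)
  hInj : ∀ h, Function.Injective (hR h)

namespace Inst

variable {S H : Type} [Fintype S]

/-- The set of students assigned to school `h` by `M`. -/
noncomputable def assigned (I : Inst S H) (M : S → Option H) (h : H) : Finset S :=
  Finset.univ.filter (fun s => M s = some h)

/-- `M` respects capacities and individual rationality. -/
def feasible (I : Inst S H) (M : S → Option H) : Prop :=
  (∀ h, (I.assigned M h).card ≤ I.cap h) ∧
  ∀ s h, M s = some h → I.sR s (some h) < I.sR s none ∧ I.hR h (some s) < I.hR h none

def underfilled (I : Inst S H) (M : S → Option H) (h : H) : Prop :=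
  (I.assigned M h).card < I.cap h

/-- Type-1 blocking pair: `h` prefers `s` to one of its assigned students. -/
def block1 (I : Inst S H) (M : S → Option H) (s : S) (h : H) : Prop :=
  M s ≠ some h ∧ I.sR s (some h) < I.sR s (M s) ∧
  ∃ s', M s' = some h ∧ I.hR h (some s) < I.hR h (some s')

/-- Type-2 blocking pair: `h` is under-filled and prefers `s` to an empty seat. -/
def block2 (I : Inst S H) (M : S → Option H) (s : S) (h : H) : Prop :=
  M s ≠ some h ∧ I.sR s (some h) < I.sR s (M s) ∧
  I.underfilled M h ∧ I.hR h (some s) < I.hR h none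

def stable (I : Inst S H) (M : S → Option H) : Prop :=
  I.feasible M ∧ ∀ s h, ¬ I.block1 M s h ∧ ¬ I.block2 M s h

/-- Students who strictly prefer `h` to their current assignment. -/
noncomputable def preferring (I : Inst S H) (M : S → Option H) (h : H) : Finset S :=
  Finset.univ.filter (fun s => I.sR s (some h) < I.sR s (M s))

/-- `s` is the least preferred student assigned to `h`. -/
def isLPS (I : Inst S H) (M : S → Option H) (h : H) (s : S) : Prop :=
  s ∈ I.assigned M h ∧ ∀ s' ∈ I.assigned M h, I.hR h (some s') ≤ I.hR h (some s)

/-- `s` is the best student preferring `h` (BS-Preferring). -/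
def isBSP (I : Inst S H) (M : S → Option H) (h : H) (s : S) : Prop :=
  s ∈ I.preferring M h ∧ ∀ s' ∈ I.preferring M h, I.hR h (some s) ≤ I.hR h (some s')

/-- The instance with capacities expanded to cover any over-assignment in `M'`. -/
noncomputable def expand (I : Inst S H) (M' : S → Option H) : Inst S H :=
  ⟨fun h => max (I.cap h) ((I.assigned M' h).card), I.sR, I.hR, I.sInj, I.hInj⟩

/-- `s` appears before `Barrier(h) = BS-Preferring(h)` in `h`'s list
(before `∅` if no student prefers `h`). -/
def beforeBarrier (I : Inst S H) (M : S → Option H) (h : H) (s : S) : Prop :=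
  ((I.preferring M h).Nonempty ∧ ∃ b, I.isBSP M h b ∧ I.hR h (some s) < I.hR h (some b)) ∨
  (I.preferring M h = ∅ ∧ I.hR h (some s) < I.hR h none)

end Inst

namespace Inst

variable {S H : Type} [Fintype S]

/-- Matched students (of round R1) who strictly prefer `h` to their assignment. -/
noncomputable def preferringMatched (I : Inst S H) (M : S → Option H) (h : H) : Finset S :=
  Finset.univ.filter (fun s => M s ≠ none ∧ I.sR s (some h) < I.sR s (M s))

/-- `s` appears before the barrier of `h`, computed from `M` restricted to
matched students (hence independently of the left-over students' reports). -/
def beforeBarrierMatched (I : Inst S H) (M : S → Option H) (h : H) (s : S) : Prop :=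
  ((I.preferringMatched M h).Nonempty ∧
    ∃ b ∈ I.preferringMatched M h,
      (∀ s' ∈ I.preferringMatched M h, I.hR h (some b) ≤ I.hR h (some s')) ∧
      I.hR h (some s) < I.hR h (some b)) ∨
  (I.preferringMatched M h = ∅ ∧ I.hR h (some s) < I.hR h none)

/-- The outcome of the barrier mechanism for a left-over student who reports
the preference ranking `r`: the `r`-best school, among the schools at which she
beats the barrier, that she reports preferring to being unmatched. -/
def barrierOutcome (I : Inst S H) (M : S → Option H) (s : S)
    (r : Option H → ℕ) (a : Option H) : Prop :=
  (a = none ∧ ∀ h, I.beforeBarrierMatched M h s → ¬ r (some h) < r none) ∨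
  (∃ h, a = some h ∧ I.beforeBarrierMatched M h s ∧ r (some h) < r none ∧
    ∀ h', I.beforeBarrierMatched M h' s → r (some h') < r none →
      r (some h) ≤ r (some h'))

end Inst

/-- DSIC for left-over students in the barrier mechanism of Setting I: for a
left-over student `s`, with everyone else's reports fixed (so the barriers are
fixed), the outcome when she reports her true list `I.sR s` is weakly preferred
(under her true preferences) to the outcome under any other report `r`. -/
theorem barrier_mechanism_DSIC {S H : Type} [Fintype S] (I : Inst S H)
    (M : S → Option H) (hM : I.stable M) (s : S) (hs : M s = none)
    (r : Option H → ℕ) (hr : Function.Injective r) (aT aR : Option H)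
    (hT : I.barrierOutcome M s (I.sR s) aT) (hR : I.barrierOutcome M s r aR) :
    I.sR s aT ≤ I.sR s aR := by
  rcases hT with ⟨haT, hno⟩ | ⟨h, haT, hbb, hlt, hmin⟩
  · subst haT
    rcases hR with ⟨haR, -⟩ | ⟨h', haR, hbb', -, -⟩
    · subst haR; exact le_refl _
    · subst haR; exact le_of_not_gt (hno h' hbb')
  · subst haT
    rcases hR with ⟨haR, -⟩ | ⟨h', haR, hbb', hlt', -⟩
    · subst haR; exact le_of_lt hlt
    · subst haR
      by_cases hc : I.sR s (some h') < I.sR s none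
      · exact hmin h' hbb' hc
      · exact le_of_lt (lt_of_lt_of_le hlt (le_of_not_gt hc))
end

section
/- In mechanism M1 of Setting III, each reassignment step preserves the absence of type-1 blocking pairs: if M has no type-1 blocking pair and school h_j has a type-2 blocking pair, then after reassigning s = BS-Preferring(h_j) to h_j, the new matching still has no type-1 blocking pair; consequently, when the loop terminates the resulting matching is stable. -/
open scoped Classical

/-- A reassignment step of mechanism `M1` preserves the absence of type-1
blocking pairs: if `M` has no type-1 blocking pair and school `h_j` is in a
type-2 blocking pair, then after reassigning `s = BS-Preferring(h_j)` to `h_j`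
there is still no type-1 blocking pair; consequently, once no type-2 blocking
pair remains, the matching is stable. -/
theorem reassignment_preserves_no_block1 {S H : Type} [Fintype S] (I : Inst S H)
    (M : S → Option H) (hfeas : I.feasible M)
    (hno1 : ∀ s h, ¬ I.block1 M s h)
    (hj : H) (hb2 : ∃ s0, I.block2 M s0 hj)
    (s : S) (hs : I.isBSP M hj s)
    (M' : S → Option H) (hM' : M' = Function.update M s (some hj)) :
    (∀ s' h, ¬ I.block1 M' s' h) ∧
    ((∀ s' h, ¬ I.block2 M' s' h) → I.stable M') := by
  classical
  subst hM'
  obtain ⟨hsp, hsmin⟩ := hs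
  have hspref : I.sR s (some hj) < I.sR s (M s) := by
    simpa [Inst.preferring] using hsp
  obtain ⟨s0, hs0ne, hs0pref, hunder, hs0emp⟩ := hb2
  have hs0mem : s0 ∈ I.preferring M hj := by
    simp [Inst.preferring, hs0pref]
  have hno1' : ∀ s' h, ¬ I.block1 (Function.update M s (some hj)) s' h := by
    intro s' h hb
    obtain ⟨hne, hpref, s'', hs'', hrs⟩ := hb
    by_cases hh : h = hj
    · rw [hh] at hne hpref hs'' hrs
      have hs'ne : s' ≠ s := by
        intro e; subst e; simp [Function.update_self] at hne
      rw [Function.update_of_ne hs'ne] at hne hpref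
      have hs'pref : s' ∈ I.preferring M hj := by
        simp [Inst.preferring, hpref]
      have hle := hsmin s' hs'pref
      by_cases hs''eq : s'' = s
      · subst hs''eq
        exact absurd hrs (not_lt.mpr hle)
      · rw [Function.update_of_ne hs''eq] at hs''
        exact hno1 s' hj ⟨hne, hpref, s'', hs'', hrs⟩
    · have hs''ne : s'' ≠ s := by
        intro e; subst e
        rw [Function.update_self] at hs''
        exact hh (Option.some.inj hs'').symm
      rw [Function.update_of_ne hs''ne] at hs''
      by_cases hs'eq : s' = s
      · rw [hs'eq] at hpref hrs
        rw [Function.update_self] at hpref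
        have hpref2 : I.sR s (some h) < I.sR s (M s) := hpref.trans hspref
        have hMh : M s ≠ some h := by
          intro e; rw [e] at hpref2; exact lt_irrefl _ hpref2
        exact hno1 s h ⟨hMh, hpref2, s'', hs'', hrs⟩
      · rw [Function.update_of_ne hs'eq] at hne hpref
        exact hno1 s' h ⟨hne, hpref, s'', hs'', hrs⟩
  refine ⟨hno1', fun hno2' => ⟨⟨?_, ?_⟩, fun s' h => ⟨hno1' s' h, hno2' s' h⟩⟩⟩
  · -- capacities
    intro h
    by_cases hh : h = hj
    · rw [hh]
      have hsub : I.assigned (Function.update M s (some hj)) hj ⊆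
          insert s (I.assigned M hj) := by
        intro t ht
        simp only [Inst.assigned, Finset.mem_filter, Finset.mem_univ, true_and] at ht
        by_cases hts : t = s
        · rw [hts]; exact Finset.mem_insert_self s _
        · rw [Function.update_of_ne hts] at ht
          exact Finset.mem_insert_of_mem (by simp [Inst.assigned, ht])
      calc (I.assigned (Function.update M s (some hj)) hj).card
          ≤ (insert s (I.assigned M hj)).card := Finset.card_le_card hsub
        _ ≤ (I.assigned M hj).card + 1 := Finset.card_insert_le _ _
        _ ≤ I.cap hj := hunder
    · have hsub : I.assigned (Function.update M s (some hj)) h ⊆ I.assigned M h := by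
        intro t ht
        simp only [Inst.assigned, Finset.mem_filter, Finset.mem_univ, true_and] at ht ⊢
        by_cases hts : t = s
        · subst hts; rw [Function.update_self] at ht
          exact absurd (Option.some.inj ht).symm hh
        · rwa [Function.update_of_ne hts] at ht
      exact (Finset.card_le_card hsub).trans (hfeas.1 h)
  · -- individual rationality
    intro s' h hs'h
    by_cases hs'eq : s' = s
    · rw [hs'eq] at hs'h ⊢
      rw [Function.update_self] at hs'h
      have hhj : h = hj := Option.some.inj hs'h.symm
      rw [hhj]
      constructor
      · cases hMs : M s with
        | none => rw [hMs] at hspref; exact hspref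
        | some h'' =>
          rw [hMs] at hspref
          exact hspref.trans (hfeas.2 s h'' hMs).1
      · exact lt_of_le_of_lt (hsmin s0 hs0mem) hs0emp
    · rw [Function.update_of_ne hs'eq] at hs'h
      exact hfeas.2 s' h hs'h
end

section
/- In Setting III with all other students truthful and participating in round R1, a defecting student s_i who skips round R1 is assigned by mechanism M2 in round R2 to the same school she would have been assigned by M1 had she participated in round R1, regardless of the preference list she reports; in particular she cannot strictly gain by defecting. -/
open scoped Classical

namespace Inst

variable {S H : Type} [Fintype S]

/-- `M` is the student-optimal stable matching: stable and weakly preferred by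
every student to every stable matching. -/
def studentOptimal (I : Inst S H) (M : S → Option H) : Prop :=
  I.stable M ∧ ∀ M', I.stable M' → ∀ s, I.sR s (M s) ≤ I.sR s (M' s)

/-- `Schools-FBPairs(s)`: the schools that would form a blocking pair with `s`
if `s` were left unmatched. -/
def SFB (I : Inst S H) (M : S → Option H) (s : S) : Set H :=
  {h | (∃ l, I.isLPS M h l ∧ I.hR h (some s) < I.hR h (some l)) ∧
        I.sR s (some h) < I.sR s none} ∪
  {h | I.underfilled M h ∧ I.hR h (some s) < I.hR h none ∧
        I.sR s (some h) < I.sR s none}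

/-- One reassignment step of mechanism `M1` after the defector `si` has been
removed: a school `h` in a type-2 blocking pair (among the participants)
receives its best preferring participant. -/
def reStep (I : Inst S H) (si : S) (M M' : S → Option H) : Prop :=
  ∃ h s, (∃ s0, s0 ≠ si ∧ I.block2 M s0 h) ∧ s ≠ si ∧
    s ∈ I.preferring M h ∧
    (∀ s' ∈ I.preferring M h, s' ≠ si → I.hR h (some s) ≤ I.hR h (some s')) ∧
    M' = Function.update M s (some h)

end Inst

namespace Inst

variable {S H : Type} [Fintype S]

lemma mem_assigned {I : Inst S H} {M : S → Option H} {h : H} {s : S} :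
    s ∈ I.assigned M h ↔ M s = some h := by
  simp [assigned]

lemma mem_preferring {I : Inst S H} {M : S → Option H} {h : H} {s : S} :
    s ∈ I.preferring M h ↔ I.sR s (some h) < I.sR s (M s) := by
  simp [preferring]

lemma mem_SFB {I : Inst S H} {M : S → Option H} {s : S} {h : H} :
    h ∈ I.SFB M s ↔
      ((∃ l, I.isLPS M h l ∧ I.hR h (some s) < I.hR h (some l)) ∧
        I.sR s (some h) < I.sR s none) ∨
      (I.underfilled M h ∧ I.hR h (some s) < I.hR h none ∧
        I.sR s (some h) < I.sR s none) := Iff.rfl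

lemma hR_lt_or {I : Inst S H} {h : H} {a b : Option S} (hne : a ≠ b) :
    I.hR h a < I.hR h b ∨ I.hR h b < I.hR h a := by
  rcases lt_trichotomy (I.hR h a) (I.hR h b) with h1 | h1 | h1
  · exact Or.inl h1
  · exact absurd (I.hInj h h1) hne
  · exact Or.inr h1

lemma assigned_update_self (I : Inst S H) (M : S → Option H) (x : S) (h : H) :
    I.assigned (Function.update M x (some h)) h = insert x (I.assigned M h) := by
  ext s
  rcases eq_or_ne s x with rfl | hs
  · simp [mem_assigned, Function.update_self]
  · simp [mem_assigned, Function.update_of_ne hs, hs]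

lemma assigned_update_ne (I : Inst S H) (M : S → Option H) (x : S) (a : Option H) (g : H)
    (hg : a ≠ some g) :
    I.assigned (Function.update M x a) g = (I.assigned M g).erase x := by
  ext s
  rcases eq_or_ne s x with rfl | hs
  · simp [mem_assigned, Function.update_self, hg]
  · simp [mem_assigned, Function.update_of_ne hs, hs]

/-- The invariants maintained along the reassignment chain. -/
structure Good (I : Inst S H) (M0 : S → Option H) (si : S) (N : S → Option H) : Prop where
  i1 : N si = none
  i2 : I.feasible N
  i3 : ∀ s, s ≠ si → I.sR s (N s) ≤ I.sR s (M0 s)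
  i4 : ∀ s h, s ≠ si → ¬ I.block1 N s h
  i5 : ∀ g, (I.assigned N g).card ≤ (I.assigned M0 g).card
  i6 : ∀ g g', (I.assigned N g).card < (I.assigned M0 g).card →
      (I.assigned N g').card < (I.assigned M0 g').card → g = g'
  i6b : ∀ g, (I.assigned M0 g).card ≤ (I.assigned N g).card + 1
  i7 : ∀ h s, I.sR si (some h) < I.sR si (M0 si) → I.hR h (some si) < I.hR h none →
      N s = some h → I.hR h (some s) < I.hR h (some si)

lemma good_base {I : Inst S H} {M0 : S → Option H} {si : S} (hst : I.stable M0) :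
    Good I M0 si (Function.update M0 si none) := by
  have hass : ∀ g, I.assigned (Function.update M0 si none) g = (I.assigned M0 g).erase si :=
    fun g => I.assigned_update_ne M0 si none g (by simp)
  refine { i1 := ?_, i2 := ?_, i3 := ?_, i4 := ?_, i5 := ?_, i6 := ?_, i6b := ?_, i7 := ?_ }
  · exact Function.update_self _ _ _
  · constructor
    · intro g
      rw [hass g]
      exact le_trans Finset.card_erase_le (hst.1.1 g)
    · intro s g hs
      rcases eq_or_ne si s with rfl | hsne
      · rw [Function.update_self] at hs; exact nomatch hs
      · rw [Function.update_of_ne (Ne.symm hsne)] at hs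
        exact hst.1.2 s g hs
  · intro s hs
    rw [Function.update_of_ne hs]
  · intro s g hs hb
    obtain ⟨hne, hpref, s', hs', hlt⟩ := hb
    rw [Function.update_of_ne hs] at hne hpref
    have hs'ne : s' ≠ si := by
      intro e; subst e; rw [Function.update_self] at hs'; exact nomatch hs'
    rw [Function.update_of_ne hs'ne] at hs'
    exact (hst.2 s g).1 ⟨hne, hpref, s', hs', hlt⟩
  · intro g
    rw [hass g]
    exact Finset.card_erase_le
  · intro g g' hg hg'
    rw [hass g] at hg
    rw [hass g'] at hg'
    have h1 : si ∈ I.assigned M0 g := by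
      by_contra hx
      rw [Finset.erase_eq_of_notMem hx] at hg
      exact lt_irrefl _ hg
    have h2 : si ∈ I.assigned M0 g' := by
      by_contra hx
      rw [Finset.erase_eq_of_notMem hx] at hg'
      exact lt_irrefl _ hg'
    have e1 := mem_assigned.1 h1
    have e2 := mem_assigned.1 h2
    rw [e1] at e2
    exact Option.some_injective H e2
  · intro g
    rw [hass g]
    calc (I.assigned M0 g).card
        ≤ (insert si ((I.assigned M0 g).erase si)).card :=
          Finset.card_le_card (Finset.subset_insert_iff.2 (Finset.Subset.refl _))
      _ ≤ ((I.assigned M0 g).erase si).card + 1 := Finset.card_insert_le _ _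
  · intro h s hs1 hs2 hNs
    have hsne : s ≠ si := by
      intro e; subst e; rw [Function.update_self] at hNs; exact nomatch hNs
    rw [Function.update_of_ne hsne] at hNs
    have hM0ne : M0 si ≠ some h := by
      intro e; rw [e] at hs1; exact lt_irrefl _ hs1
    rcases hR_lt_or (a := (some s : Option S)) (b := some si)
        (fun e => hsne (Option.some_injective S e)) with hgood | hbad
    · exact hgood
    · exact absurd ((hst.2 si h).1) (fun hn => hn ⟨hM0ne, hs1, s, hNs, hbad⟩)

/-- The key stable matching construction: if `si` strictly prefers `h` to `M0 si`,
`h` accepts `si`, `h` is the deficient school, and no participant preferring `h`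
is better (for `h`) than `si`, then putting `si` into `h` on top of `N` is stable. -/
lemma Wstable {I : Inst S H} {M0 : S → Option H} {si : S} {N : S → Option H} {h : H}
    (hst : I.stable M0) (hG : Good I M0 si N)
    (hs1 : I.sR si (some h) < I.sR si (M0 si))
    (hs2 : I.hR h (some si) < I.hR h none)
    (hdefh : (I.assigned N h).card < (I.assigned M0 h).card)
    (hM0full : (I.assigned M0 h).card = I.cap h)
    (hkill : ∀ s, s ≠ si → I.sR s (some h) < I.sR s (N s) →
      I.hR h (some s) < I.hR h (some si) → False) :
    I.stable (Function.update N si (some h)) := by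
  set W := Function.update N si (some h) with hWdef
  have hWsi : W si = some h := Function.update_self _ _ _
  have hWs : ∀ s, s ≠ si → W s = N s := fun s hs => Function.update_of_ne hs _ _
  have hAh : I.assigned W h = insert si (I.assigned N h) := I.assigned_update_self N si h
  have hsiA : ∀ g, si ∉ I.assigned N g := by
    intro g hmem
    have hx := mem_assigned.1 hmem
    rw [hG.i1] at hx
    exact nomatch hx
  have hAg : ∀ g, g ≠ h → I.assigned W g = I.assigned N g := by
    intro g hg
    rw [I.assigned_update_ne N si (some h) g (fun e => hg (Option.some_injective H e).symm)]
    exact Finset.erase_eq_of_notMem (hsiA g)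
  have hcardWh : (I.assigned W h).card = (I.assigned M0 h).card := by
    rw [hAh, Finset.card_insert_of_notMem (hsiA h)]
    have := hG.i6b h
    omega
  have hnodefN : ∀ g, g ≠ h → (I.assigned N g).card = (I.assigned M0 g).card := by
    intro g hg
    rcases lt_or_eq_of_le (hG.i5 g) with hlt | heq
    · exact absurd (hG.i6 g h hlt hdefh) hg
    · exact heq
  have hM0le : I.sR si (M0 si) ≤ I.sR si none := by
    rcases e : M0 si with _ | g
    · exact le_refl _
    · exact le_of_lt (hst.1.2 si g e).1
  have hsRnone : I.sR si (some h) < I.sR si none := lt_of_lt_of_le hs1 hM0le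
  constructor
  · constructor
    · intro g
      rcases eq_or_ne g h with rfl | hg
      · rw [hcardWh, hM0full]
      · rw [hAg g hg]; exact hG.i2.1 g
    · intro s g hs
      rcases eq_or_ne si s with rfl | hsne
      · rw [hWsi] at hs
        injection hs with e
        subst e
        exact ⟨hsRnone, hs2⟩
      · rw [hWs s (Ne.symm hsne)] at hs
        exact hG.i2.2 s g hs
  · intro s g
    rcases eq_or_ne si s with rfl | hsne
    · constructor
      · intro hb
        obtain ⟨hne, hpref, s', hs', hlt⟩ := hb
        rw [hWsi] at hne hpref
        have hgne : g ≠ h := fun e => hne (by rw [e])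
        have hs'ne : s' ≠ si := by
          intro e; subst e; rw [hWsi] at hs'
          injection hs' with e'
          exact hgne e'.symm
        rw [hWs s' hs'ne] at hs'
        have hacc' : I.hR g (some si) < I.hR g none :=
          lt_trans hlt (hG.i2.2 s' g hs').2
        have := hG.i7 g s' (lt_trans hpref hs1) hacc' hs'
        exact absurd hlt (lt_asymm this)
      · intro hb
        obtain ⟨hne, hpref, hu, hacc⟩ := hb
        rw [hWsi] at hne hpref
        have hgne : g ≠ h := fun e => hne (by rw [e])
        have huM0 : I.underfilled M0 g := by
          have hx : (I.assigned W g).card < I.cap g := hu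
          rwa [hAg g hgne, hnodefN g hgne] at hx
        have hM0ne : M0 si ≠ some g := by
          intro e
          have hx := lt_trans hpref hs1
          rw [e] at hx
          exact lt_irrefl _ hx
        exact (hst.2 si g).2 ⟨hM0ne, lt_trans hpref hs1, huM0, hacc⟩
    · have hsne' : s ≠ si := Ne.symm hsne
      constructor
      · intro hb
        obtain ⟨hne, hpref, s', hs', hlt⟩ := hb
        rw [hWs s hsne'] at hne hpref
        rcases eq_or_ne si s' with rfl | hs'ne
        · rw [hWsi] at hs'
          injection hs' with e
          subst e
          exact hkill s hsne' hpref hlt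
        · rw [hWs s' (Ne.symm hs'ne)] at hs'
          exact hG.i4 s g hsne' ⟨hne, hpref, s', hs', hlt⟩
      · intro hb
        obtain ⟨hne, hpref, hu, hacc⟩ := hb
        rw [hWs s hsne'] at hne hpref
        rcases eq_or_ne g h with rfl | hgne
        · have hx : (I.assigned W g).card < I.cap g := hu
          rw [hcardWh, hM0full] at hx
          exact lt_irrefl _ hx
        · have huM0 : I.underfilled M0 g := by
            have hx : (I.assigned W g).card < I.cap g := hu
            rwa [hAg g hgne, hnodefN g hgne] at hx
          have himp : I.sR s (some g) < I.sR s (M0 s) :=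
            lt_of_lt_of_le hpref (hG.i3 s hsne')
          have hM0ne : M0 s ≠ some g := by
            intro e; rw [e] at himp; exact lt_irrefl _ himp
          exact (hst.2 s g).2 ⟨hM0ne, himp, huM0, hacc⟩

lemma no_scope_vacancy {I : Inst S H} {M0 : S → Option H} {si : S} {N : S → Option H} {h : H}
    (hopt : I.studentOptimal M0) (hG : Good I M0 si N)
    (hs1 : I.sR si (some h) < I.sR si (M0 si))
    (hs2 : I.hR h (some si) < I.hR h none)
    (hdefh : (I.assigned N h).card < (I.assigned M0 h).card)
    (hM0full : (I.assigned M0 h).card = I.cap h)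
    (hkill : ∀ s, s ≠ si → I.sR s (some h) < I.sR s (N s) →
      I.hR h (some s) < I.hR h (some si) → False) : False := by
  have hWst := Wstable hopt.1 hG hs1 hs2 hdefh hM0full hkill
  have hle := hopt.2 _ hWst si
  rw [Function.update_self] at hle
  exact absurd hs1 (not_lt.2 hle)

lemma good_step {I : Inst S H} {M0 : S → Option H} {si : S}
    (hopt : I.studentOptimal M0) {N N' : S → Option H}
    (hG : Good I M0 si N) (hstep : I.reStep si N N') : Good I M0 si N' := by
  obtain ⟨h, x, ⟨s0, hs0ne, hs0b⟩, hxne, hxpref, hxmin, rfl⟩ := hstep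
  have hst := hopt.1
  have hxpref' : I.sR x (some h) < I.sR x (N x) := mem_preferring.1 hxpref
  have hNxh : N x ≠ some h := by
    intro e; rw [e] at hxpref'; exact lt_irrefl _ hxpref'
  have hund : I.underfilled N h := hs0b.2.2.1
  have hs0pref : I.sR s0 (some h) < I.sR s0 (N s0) := hs0b.2.1
  have hxacc : I.hR h (some x) < I.hR h none :=
    lt_of_le_of_lt (hxmin s0 (mem_preferring.2 hs0pref) hs0ne) hs0b.2.2.2
  have hxnone : I.sR x (some h) < I.sR x none := by
    rcases e : N x with _ | g
    · rw [e] at hxpref'; exact hxpref'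
    · have hx := hxpref'
      rw [e] at hx
      exact lt_trans hx (hG.i2.2 x g e).1
  have hM0full : (I.assigned M0 h).card = I.cap h := by
    have h1 : I.sR s0 (some h) < I.sR s0 (M0 s0) :=
      lt_of_lt_of_le hs0pref (hG.i3 s0 hs0ne)
    have hs0M0 : M0 s0 ≠ some h := by
      intro e; rw [e] at h1; exact lt_irrefl _ h1
    by_contra hne
    have hu : I.underfilled M0 h := lt_of_le_of_ne (hst.1.1 h) hne
    exact (hst.2 s0 h).2 ⟨hs0M0, h1, hu, hs0b.2.2.2⟩
  have hdefh : (I.assigned N h).card < (I.assigned M0 h).card := by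
    rw [hM0full]; exact hund
  have hnodef : ∀ g, g ≠ h → (I.assigned N g).card = (I.assigned M0 g).card := by
    intro g hg
    rcases lt_or_eq_of_le (hG.i5 g) with hlt | heq
    · exact absurd (hG.i6 g h hlt hdefh) hg
    · exact heq
  have hAh : I.assigned (Function.update N x (some h)) h = insert x (I.assigned N h) :=
    I.assigned_update_self N x h
  have hAne : ∀ g, g ≠ h →
      I.assigned (Function.update N x (some h)) g = (I.assigned N g).erase x :=
    fun g hg => I.assigned_update_ne N x (some h) g
      (fun e => hg (Option.some_injective H e).symm)
  have hxh : x ∉ I.assigned N h := fun hx => hNxh (mem_assigned.1 hx)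
  have hcardh : (I.assigned (Function.update N x (some h)) h).card
      = (I.assigned M0 h).card := by
    rw [hAh, Finset.card_insert_of_notMem hxh]
    have := hG.i6b h
    omega
  refine { i1 := ?_, i2 := ?_, i3 := ?_, i4 := ?_, i5 := ?_, i6 := ?_, i6b := ?_, i7 := ?_ }
  · rw [Function.update_of_ne (Ne.symm hxne), hG.i1]
  · constructor
    · intro g
      rcases eq_or_ne g h with rfl | hg
      · rw [hcardh, hM0full]
      · rw [hAne g hg]
        exact le_trans Finset.card_erase_le (hG.i2.1 g)
    · intro s g hs
      rcases eq_or_ne x s with rfl | hsne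
      · rw [Function.update_self] at hs
        injection hs with e
        subst e
        exact ⟨hxnone, hxacc⟩
      · rw [Function.update_of_ne (Ne.symm hsne)] at hs
        exact hG.i2.2 s g hs
  · intro s hs
    rcases eq_or_ne x s with rfl | hsne
    · rw [Function.update_self]
      exact le_of_lt (lt_of_lt_of_le hxpref' (hG.i3 x hs))
    · rw [Function.update_of_ne (Ne.symm hsne)]
      exact hG.i3 s hs
  · intro s g hs hb
    obtain ⟨hne, hpref, s', hs', hlt⟩ := hb
    rcases eq_or_ne x s with rfl | hsne
    · rw [Function.update_self] at hne hpref
      have hgne : g ≠ h := fun e => hne (by rw [e])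
      have hs'ne : s' ≠ x := by
        intro e; subst e
        rw [Function.update_self] at hs'
        injection hs' with e'
        exact hgne e'.symm
      rw [Function.update_of_ne hs'ne] at hs'
      have hNg : N x ≠ some g := by
        intro e
        have hx2 := lt_trans hpref hxpref'
        rw [e] at hx2
        exact lt_irrefl _ hx2
      exact hG.i4 x g hxne ⟨hNg, lt_trans hpref hxpref', s', hs', hlt⟩
    · rw [Function.update_of_ne (Ne.symm hsne)] at hne hpref
      rcases eq_or_ne x s' with rfl | hs'ne
      · rw [Function.update_self] at hs'
        injection hs' with e
        subst e
        exact absurd hlt (not_lt.2 (hxmin s (mem_preferring.2 hpref) hs))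
      · rw [Function.update_of_ne (Ne.symm hs'ne)] at hs'
        exact hG.i4 s g hs ⟨hne, hpref, s', hs', hlt⟩
  · intro g
    rcases eq_or_ne g h with rfl | hg
    · rw [hcardh]
    · rw [hAne g hg]
      exact le_trans Finset.card_erase_le (hG.i5 g)
  · intro g g' hg hg'
    rcases eq_or_ne g h with rfl | hgne
    · rw [hcardh] at hg; exact absurd hg (lt_irrefl _)
    · rcases eq_or_ne g' h with rfl | hg'ne
      · rw [hcardh] at hg'; exact absurd hg' (lt_irrefl _)
      · rw [hAne g hgne] at hg
        rw [hAne g' hg'ne] at hg'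
        have h1 : x ∈ I.assigned N g := by
          by_contra hx
          rw [Finset.erase_eq_of_notMem hx, hnodef g hgne] at hg
          exact lt_irrefl _ hg
        have h2 : x ∈ I.assigned N g' := by
          by_contra hx
          rw [Finset.erase_eq_of_notMem hx, hnodef g' hg'ne] at hg'
          exact lt_irrefl _ hg'
        have e1 := mem_assigned.1 h1
        have e2 := mem_assigned.1 h2
        rw [e1] at e2
        exact Option.some_injective H e2
  · intro g
    rcases eq_or_ne g h with rfl | hg
    · rw [hcardh]
      omega
    · rw [hAne g hg]
      by_cases hx : x ∈ I.assigned N g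
      · rw [Finset.card_erase_of_mem hx]
        have h1 := hnodef g hg
        have h2 : 1 ≤ (I.assigned N g).card := Finset.card_pos.2 ⟨x, hx⟩
        omega
      · rw [Finset.erase_eq_of_notMem hx]
        exact hG.i6b g
  · intro g s hs1 hs2 hNs
    rcases eq_or_ne x s with rfl | hsne
    · rw [Function.update_self] at hNs
      injection hNs with e
      subst e
      rcases hR_lt_or (a := (some x : Option S)) (b := some si)
          (fun e => hxne (Option.some_injective S e)) with hgood | hbad
      · exact hgood
      · exfalso
        exact no_scope_vacancy hopt hG hs1 hs2 hdefh hM0full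
          (fun s' hs'ne hp hlt =>
            absurd (hxmin s' (mem_preferring.2 hp) hs'ne)
              (not_le.2 (lt_trans hlt hbad)))
    · rw [Function.update_of_ne (Ne.symm hsne)] at hNs
      exact hG.i7 g s hs1 hs2 hNs

lemma good_M {I : Inst S H} {M0 M : S → Option H} {si : S}
    (hopt : I.studentOptimal M0)
    (hchain : Relation.ReflTransGen (I.reStep si) (Function.update M0 si none) M) :
    Good I M0 si M := by
  induction hchain with
  | refl => exact good_base hopt.1
  | tail _ hbc ih => exact good_step hopt ih hbc

lemma lemX {I : Inst S H} {M0 M : S → Option H} {si : S}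
    (hopt : I.studentOptimal M0) (hG : Good I M0 si M)
    (hterm : ∀ s h, s ≠ si → ¬ I.block2 M s h)
    {h : H} (hmem : h ∈ I.SFB M si) : ¬ I.sR si (some h) < I.sR si (M0 si) := by
  intro hs1
  rcases mem_SFB.1 hmem with ⟨⟨l, hl, hlt⟩, _⟩ | ⟨hu, hacc, _⟩
  · have hlacc : I.hR h (some si) < I.hR h none :=
      lt_trans hlt (hG.i2.2 l h (mem_assigned.1 hl.1)).2
    exact absurd (hG.i7 h l hs1 hlacc (mem_assigned.1 hl.1)) (lt_asymm hlt)
  · have hM0full : (I.assigned M0 h).card = I.cap h := by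
      by_contra hne
      have hu0 : I.underfilled M0 h := lt_of_le_of_ne (hopt.1.1.1 h) hne
      have hM0ne : M0 si ≠ some h := by
        intro e; rw [e] at hs1; exact lt_irrefl _ hs1
      exact (hopt.1.2 si h).2 ⟨hM0ne, hs1, hu0, hacc⟩
    have hdefh : (I.assigned M h).card < (I.assigned M0 h).card := by
      rw [hM0full]; exact hu
    exact no_scope_vacancy hopt hG hs1 hacc hdefh hM0full
      (fun s hsne hp hlt => hterm s h hsne
        ⟨(fun e => by rw [e] at hp; exact lt_irrefl _ hp), hp, hu, lt_trans hlt hacc⟩)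

lemma lemY {I : Inst S H} {M0 M : S → Option H} {si : S}
    (hopt : I.studentOptimal M0) (hG : Good I M0 si M)
    {h0 : H} (h0eq : M0 si = some h0) : h0 ∈ I.SFB M si := by
  have hfeas0 := hopt.1.1
  have hsi := hfeas0.2 si h0 h0eq
  by_cases hu : I.underfilled M h0
  · exact mem_SFB.2 (Or.inr ⟨hu, hsi.2, hsi.1⟩)
  · refine mem_SFB.2 (Or.inl ⟨?_, hsi.1⟩)
    have hfull : I.cap h0 ≤ (I.assigned M h0).card := not_lt.1 hu
    have hsub : ¬ (I.assigned M h0 ⊆ (I.assigned M0 h0).erase si) := by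
      intro hsubs
      have h1 : (I.assigned M h0).card ≤ ((I.assigned M0 h0).erase si).card :=
        Finset.card_le_card hsubs
      rw [Finset.card_erase_of_mem (mem_assigned.2 h0eq)] at h1
      have h2 : (I.assigned M0 h0).card ≤ I.cap h0 := hfeas0.1 h0
      have h3 : 1 ≤ (I.assigned M0 h0).card :=
        Finset.card_pos.2 ⟨si, mem_assigned.2 h0eq⟩
      omega
    obtain ⟨sstar, hsA, hsnot⟩ := Finset.not_subset.1 hsub
    obtain ⟨l, hlA, hlmax⟩ := Finset.exists_max_image (I.assigned M h0)
      (fun s => I.hR h0 (some s)) ⟨sstar, hsA⟩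
    refine ⟨l, ⟨hlA, hlmax⟩, ?_⟩
    have hsne : sstar ≠ si := by
      intro e
      have hx := mem_assigned.1 hsA
      rw [e, hG.i1] at hx
      exact nomatch hx
    have hsM0 : M0 sstar ≠ some h0 := by
      intro e
      exact hsnot (Finset.mem_erase.2 ⟨hsne, mem_assigned.2 e⟩)
    have himp : I.sR sstar (some h0) < I.sR sstar (M0 sstar) := by
      have h1 : I.sR sstar (M sstar) ≤ I.sR sstar (M0 sstar) := hG.i3 sstar hsne
      rw [mem_assigned.1 hsA] at h1
      exact lt_of_le_of_ne h1 (fun e => hsM0 (I.sInj sstar e).symm)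
    have hlne : l ≠ si := by
      intro e
      have hx := mem_assigned.1 hlA
      rw [e, hG.i1] at hx
      exact nomatch hx
    rcases hR_lt_or (a := (some si : Option S)) (b := some l)
        (fun e => hlne (Option.some_injective S e).symm) with hgood | hbad
    · exact hgood
    · exfalso
      have hs_lt : I.hR h0 (some sstar) < I.hR h0 (some si) :=
        lt_of_le_of_lt (hlmax sstar hsA) hbad
      exact (hopt.1.2 sstar h0).1 ⟨hsM0, himp, si, h0eq, hs_lt⟩

end Inst

/-- Setting III, all others truthful and participating: the defector `si`, who
skips round R1 (so `M` is obtained from the student-optimal matching `M0` by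
removing `si` and iterating reassignments until no type-2 blocking pair among
participants remains), is assigned by `M2` — namely to her best school in
`Schools-FBPairs(si)` w.r.t. `M`, or to nothing if that set is empty — exactly
to `M0 si`, the school she would have received by participating; in particular
she cannot strictly gain by defecting, whatever she reports. -/
theorem defector_gains_nothing {S H : Type} [Fintype S] (I : Inst S H)
    (M0 : S → Option H) (hopt : I.studentOptimal M0) (si : S)
    (M : S → Option H)
    (hchain : Relation.ReflTransGen (I.reStep si) (Function.update M0 si none) M)
    (hterm : ∀ s h, s ≠ si → ¬ I.block2 M s h)
    (a : Option H)
    (ha : (a = none ∧ I.SFB M si = ∅) ∨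
      (∃ h, a = some h ∧ h ∈ I.SFB M si ∧
        ∀ h' ∈ I.SFB M si, I.sR si (some h) ≤ I.sR si (some h'))) :
    a = M0 si := by
  have hG : Inst.Good I M0 si M := Inst.good_M hopt hchain
  rcases ha with ⟨rfl, hempty⟩ | ⟨h, rfl, hmem, hbest⟩
  · rcases e : M0 si with _ | h0
    · rfl
    · exact absurd (Inst.lemY hopt hG e)
        (by rw [hempty]; exact Set.notMem_empty h0)
  · have hx := Inst.lemX hopt hG hterm hmem
    rcases e : M0 si with _ | h0
    · exfalso
      have hnone : I.sR si (some h) < I.sR si none := by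
        rcases Inst.mem_SFB.1 hmem with ⟨_, hs⟩ | ⟨_, _, hs⟩ <;> exact hs
      rw [e] at hx
      exact hx hnone
    · have hy := Inst.lemY hopt hG e
      rw [e] at hx
      have h1 : I.sR si (some h0) ≤ I.sR si (some h) := not_lt.1 hx
      have h2 : I.sR si (some h) ≤ I.sR si (some h0) := hbest h0 hy
      have heq : (some h : Option H) = some h0 := I.sInj si (le_antisymm h2 h1)
      rw [heq]
end

section
/- There is no pair of oblivious, stability-preserving mechanisms (M1, M2) for two-round school choice under which truth-telling (including participating in round R1) is a Nash equilibrium: there exists an instance with 4 students A,B,C,D (preferences (1,2,3),(2,1,3),(2,3,1),(2,3,1) over schools 1,2,3) and schools with preferences (B,A,C,D),(A,C,B,D),(C,B,A,D) and unit capacities, on which any such pair of mechanisms gives some City-resident student a strict incentive to skip round R1 or misreport when all others are truthful. -/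
/- Concrete two-round school-choice instance: students A,B,C,D = 0,1,2,3,
schools 1,2,3 = 0,1,2, unit capacities in round R1.
Student preferences: A:(1,2,3), B:(2,1,3), C:(2,3,1), D:(2,3,1).
School preferences: 1:(B,A,C,D), 2:(A,C,B,D), 3:(C,B,A,D).
Lower value = more preferred; being unmatched (rank 3 resp. 4) is worst,
so every student-school pair is mutually acceptable. -/

abbrev Stu := Fin 4
abbrev Sch := Fin 3

def sVal : Stu → Option Sch → ℕ := fun s o =>
  match o with
  | none => 3
  | some h => ![![0, 1, 2], ![1, 0, 2], ![2, 0, 1], ![2, 0, 1]] s h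

def hVal : Sch → Stu → ℕ := fun h s =>
  ![![1, 0, 2, 3], ![0, 2, 1, 3], ![2, 1, 0, 3]] h s

/-- `M` matches only students of `P`. -/
def matchesOnly (P : Finset Stu) (M : Stu → Option Sch) : Prop :=
  ∀ s ∉ P, M s = none

/-- No blocking pair among the present students `P`: no `s ∈ P` and school `h`
with `s` preferring `h` to `M s` while `h` either prefers `s` to one of its
assigned students (type 1) or has an empty seat (type 2; all pairs are
mutually acceptable here). -/
def noBlock (P : Finset Stu) (M : Stu → Option Sch) : Prop :=
  ¬ ∃ s ∈ P, ∃ h : Sch, sVal s (some h) < sVal s (M s) ∧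
    ((∃ s', M s' = some h ∧ hVal h s < hVal h s') ∨ (∀ s', M s' ≠ some h))

/-- A valid round-R1 outcome on participants `P`: a stable matching of `P`
respecting the unit capacities. -/
def r1Valid (P : Finset Stu) (M : Stu → Option Sch) : Prop :=
  matchesOnly P M ∧
  (∀ h : Sch, (Finset.univ.filter (fun s => M s = some h)).card ≤ 1) ∧
  noBlock P M

/-- A valid round-R2 outcome on present students `P`, extending the round-R1
matching `M0` without breaking any match, stable with capacities expanded as
needed (so a school blocks as under-filled only when it is empty). -/
def r2Valid (P : Finset Stu) (M0 M : Stu → Option Sch) : Prop :=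
  matchesOnly P M ∧ (∀ s h, M0 s = some h → M s = some h) ∧ noBlock P M

set_option maxRecDepth 4000

def μfull : Stu → Option Sch := ![some 1, some 0, some 2, none]
def μa : Stu → Option Sch := ![some 0, some 1, none, some 2]
def μb : Stu → Option Sch := ![some 1, some 0, none, some 2]
def ν  : Stu → Option Sch := ![some 0, none, none, some 1]

lemma uniq_full : ∀ M, r1Valid Finset.univ M → M = μfull := by
  unfold r1Valid matchesOnly noBlock; decide
lemma uniq_abd : ∀ M, r1Valid {0,1,3} M → M = μa ∨ M = μb := by
  unfold r1Valid matchesOnly noBlock; decide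
lemma uniq_ad : ∀ M, r1Valid {0,3} M → M = ν := by
  unfold r1Valid matchesOnly noBlock; decide

lemma svalC : ∀ o : Option Sch, o ≠ some 1 → sVal 2 (some 1) < sVal 2 o := by decide
lemma svalB : ∀ o : Option Sch, o ≠ some 1 → sVal 1 (some 1) < sVal 1 o := by decide

/-- Impossibility of oblivious, stability-preserving, ICNE mechanisms: there is
no pair `(M1, M2)` — with `M1` seeing only the round-R1 participant set (and
their preference lists) and `M2` extending `M1`'s matching over the round-R2
arrivals — producing stable matchings in both rounds, under which, both in the
City `{A,B,C,D}` and in the City `{A,B,D}`, no resident can strictly improve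
her school by skipping round R1 while all others are truthful. -/
theorem no_oblivious_ICNE :
    ¬ ∃ (M1 : Finset Stu → Stu → Option Sch)
        (M2 : (Stu → Option Sch) → Finset Stu → Stu → Option Sch),
      (∀ P, r1Valid P (M1 P)) ∧
      (∀ P A, r2Valid (P ∪ A) (M1 P) (M2 (M1 P) A)) ∧
      (∀ City : Finset Stu, City = Finset.univ ∨ City = {0, 1, 3} →
        ∀ x ∈ City,
          sVal x (M2 (M1 City) ∅ x) ≤
            sVal x (M2 (M1 (City.erase x)) {x} x)) := by
  rintro ⟨M1, M2, h1, h2, h3⟩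
  have habd := uniq_abd _ (h1 {0,1,3})
  rcases habd with ha | hb
  · -- M1 {0,1,3} = μa : use City = univ, deviator C = 2
    have hfull := uniq_full _ (h1 Finset.univ)
    have key := h3 Finset.univ (Or.inl rfl) 2 (Finset.mem_univ 2)
    have hC : M2 (M1 Finset.univ) ∅ 2 = some 2 :=
      (h2 Finset.univ ∅).2.1 2 2 (by rw [hfull]; rfl)
    have herase : (Finset.univ : Finset Stu).erase 2 = {0,1,3} := by decide
    rw [herase, hC] at key
    have hr2 := h2 ({0,1,3} : Finset Stu) {2}
    have hNB : M2 (M1 {0,1,3}) {2} 1 = some 1 :=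
      hr2.2.1 1 1 (by rw [ha]; rfl)
    have hC' : M2 (M1 {0,1,3}) {2} 2 = some 1 := by
      by_contra hne
      exact hr2.2.2 ⟨2, by decide, 1, svalC _ hne, Or.inl ⟨1, hNB, by decide⟩⟩
    rw [hC'] at key
    exact absurd key (by decide)
  · -- M1 {0,1,3} = μb : use City = {0,1,3}, deviator B = 1
    have key := h3 {0,1,3} (Or.inr rfl) 1 (by decide)
    have hB : M2 (M1 {0,1,3}) ∅ 1 = some 0 :=
      (h2 ({0,1,3} : Finset Stu) ∅).2.1 1 0 (by rw [hb]; rfl)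
    have herase : ({0,1,3} : Finset Stu).erase 1 = {0,3} := by decide
    have hnu := uniq_ad _ (h1 {0,3})
    rw [herase, hB] at key
    have hr2 := h2 ({0,3} : Finset Stu) {1}
    have hND : M2 (M1 {0,3}) {1} 3 = some 1 :=
      hr2.2.1 3 1 (by rw [hnu]; rfl)
    have hB' : M2 (M1 {0,3}) {1} 1 = some 1 := by
      by_contra hne
      exact hr2.2.2 ⟨1, by decide, 1, svalB _ hne, Or.inl ⟨3, hND, by decide⟩⟩
    rw [hB'] at key
    exact absurd key (by decide)
end
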